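/- arXiv:1606.07053 — 5 statements merged into one kernel-verified Lean document; each statement's English description precedes it below -/
import Mathlib

section
/- Let 𝒩 = {n₁ < n₂ < ⋯} be the set of nonnegative integers expressible as a sum of two squares, and ε > 0. Then the set of indices k with n_{k+1} − n_k ≤ n_k^ε has density one in ℕ; equivalently, along a density-one subsequence of 𝒩 the gap to the next element of 𝒩 is O(n^ε). -/
/-!
Elements `n ≥ √X` of `𝒩 ∩ [0, X]` followed by a gap longer than `n ^ ε` are pairwise at least
`X ^ (ε / 2)` apart, so there are `O(√X + X ^ (1 - ε / 2))` of them. On the other hand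
`𝒩 ∩ [0, X]` contains `Q + Q` for `Q` the squares up to `X / 2`, and Cauchy–Schwarz gives
`#(Q + Q) ≥ #Q ^ 4 / E(Q)`. Every nondiagonal quadruple of the additive energy `E(Q)` comes from a
difference `b² - a² = k = (b - a)(b + a)`, so `E(Q) ≤ #Q² + 2 ∑_{k ≤ X} d(k)² ≪ X (log X)³`, whence
`#(𝒩 ∩ [0, X]) ≫ X / (log X)³`, which beats every `X ^ β` with `β < 1`.
-/

open Real Filter

/-- The set of nonnegative integers expressible as a sum of two squares. -/
def sumTwoSquares : Set ℕ := {n | ∃ a b : ℤ, (n : ℤ) = a ^ 2 + b ^ 2}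

open Finset Asymptotics
open scoped Pointwise

noncomputable def nextSumTwoSquares (n : ℕ) : ℕ := sInf {m ∈ sumTwoSquares | n < m}

theorem card_divisors_sq_le_card_triples {M k : ℕ} (hk : k ∈ Ioc 0 M) :
    #k.divisors ^ 2 ≤
      #{t ∈ Ioc 0 M ×ˢ Ioc 0 M ×ˢ Ioc 0 M | t.1 * t.2.1 * t.2.2 ∣ k} := by
  rw [mem_Ioc] at hk
  rw [sq, ← card_product]
  -- `(e, f) ↦ (g, e / g, f / g)` with `g = gcd e f`; the product of the triple is `lcm e f`.
  refine card_le_card_of_injOn (fun p => (p.1.gcd p.2, p.1 / p.1.gcd p.2, p.2 / p.1.gcd p.2))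
    ?_ ?_
  · rintro ⟨e, f⟩ hef
    simp only [coe_product, Set.mem_prod, mem_coe, Nat.mem_divisors] at hef
    obtain ⟨⟨he, -⟩, hf, -⟩ := hef
    have he0 : 0 < e := Nat.pos_of_dvd_of_pos he hk.1
    have hg0 : 0 < e.gcd f := Nat.gcd_pos_of_pos_left f he0
    have hgf : e.gcd f ≤ f := Nat.le_of_dvd (Nat.pos_of_dvd_of_pos hf hk.1) (Nat.gcd_dvd_right e f)
    have hlcm : e.gcd f * (e / e.gcd f) * (f / e.gcd f) = e.lcm f := by
      rw [Nat.mul_div_cancel' (Nat.gcd_dvd_left e f), Nat.lcm,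
        Nat.mul_div_assoc _ (Nat.gcd_dvd_right e f)]
    have heM : e ≤ M := (Nat.le_of_dvd hk.1 he).trans hk.2
    have hfM : f ≤ M := (Nat.le_of_dvd hk.1 hf).trans hk.2
    simp only [coe_filter, mem_product, mem_Ioc, Set.mem_ofPred_eq, hlcm]
    exact ⟨⟨⟨hg0, (Nat.gcd_le_left f he0).trans heM⟩,
      ⟨Nat.div_pos (Nat.gcd_le_left f he0) hg0, (Nat.div_le_self _ _).trans heM⟩,
      ⟨Nat.div_pos hgf hg0, (Nat.div_le_self _ _).trans hfM⟩⟩, Nat.lcm_dvd he hf⟩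
  · have hrecover (e f : ℕ) : (e, f) = (e.gcd f * (e / e.gcd f), e.gcd f * (f / e.gcd f)) := by
      rw [Nat.mul_div_cancel' (Nat.gcd_dvd_left e f), Nat.mul_div_cancel' (Nat.gcd_dvd_right e f)]
    rintro ⟨e, f⟩ - ⟨e', f'⟩ - h
    simp only [Prod.mk.injEq] at h
    obtain ⟨hg, he, hf⟩ := h
    rw [hrecover e f, hrecover e' f', he, hf, hg]

theorem sum_card_divisors_sq_le (M : ℕ) :
    ∑ k ∈ Ioc 0 M, (#k.divisors : ℝ) ^ 2 ≤ M * (1 + log M) ^ 3 := by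
  set A := Ioc 0 M
  have hcount : ∑ k ∈ A, #k.divisors ^ 2 ≤ ∑ t ∈ A ×ˢ A ×ˢ A, M / (t.1 * t.2.1 * t.2.2) :=
    calc ∑ k ∈ A, #k.divisors ^ 2
        ≤ ∑ k ∈ A, #{t ∈ A ×ˢ A ×ˢ A | t.1 * t.2.1 * t.2.2 ∣ k} :=
          sum_le_sum fun k hk => card_divisors_sq_le_card_triples hk
      _ = ∑ t ∈ A ×ˢ A ×ˢ A, #{k ∈ A | t.1 * t.2.1 * t.2.2 ∣ k} := by
          simp only [card_filter]; exact sum_comm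
      _ = ∑ t ∈ A ×ˢ A ×ˢ A, M / (t.1 * t.2.1 * t.2.2) := by
          simp only [A, Nat.Ioc_filter_dvd_card_eq_div]
  have hharmonic : ∑ g ∈ A, (g : ℝ)⁻¹ ≤ 1 + log M := by
    simpa [harmonic_eq_sum_Icc, A, ← Icc_add_one_left_eq_Ioc] using harmonic_le_one_add_log M
  calc ∑ k ∈ A, (#k.divisors : ℝ) ^ 2
      ≤ ∑ t ∈ A ×ˢ A ×ˢ A, ((M / (t.1 * t.2.1 * t.2.2) : ℕ) : ℝ) := by exact_mod_cast hcount
    _ ≤ ∑ t ∈ A ×ˢ A ×ˢ A, (M : ℝ) / (t.1 * t.2.1 * t.2.2) := by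
        gcongr with t; exact_mod_cast Nat.cast_div_le
    _ = M * (∑ g ∈ A, (g : ℝ)⁻¹) ^ 3 := by
        simp only [sum_product, div_eq_mul_inv, mul_inv, ← mul_assoc, ← mul_sum, ← sum_mul]; ring
    _ ≤ M * (1 + log M) ^ 3 := by gcongr

theorem addEnergy_le_sq_card_add_sum_sq {s : Finset ℕ} {M : ℕ} (hs : ∀ x ∈ s, x ≤ M) :
    s.addEnergy s ≤ #s ^ 2 + 2 * ∑ k ∈ Ioc 0 M, #{p ∈ s ×ˢ s | p.1 + k = p.2} ^ 2 := by
  set F := {x ∈ (s ×ˢ s) ×ˢ s ×ˢ s | x.1.1 + x.2.1 = x.1.2 + x.2.2}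
  have hdiag : #{x ∈ F | x.1.1 = x.1.2} ≤ #s ^ 2 := by
    rw [sq, ← card_product]
    refine card_le_card_of_injOn (fun x => (x.1.1, x.2.1)) ?_ ?_
    · intro x hx
      simp only [F, coe_filter, mem_filter, mem_product, Set.mem_ofPred_eq] at hx
      simp [hx.1.1.1.1, hx.1.1.2.1]
    · rintro ⟨⟨u₁, u₂⟩, v₁, v₂⟩ hx ⟨⟨u₁', u₂'⟩, v₁', v₂'⟩ hy h
      simp only [F, coe_filter, mem_filter, Set.mem_ofPred_eq] at hx hy
      simp only [Prod.mk.injEq] at h ⊢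
      omega
  -- A quadruple with `u₁ < u₂` is a pair of pairs with the common difference `k = u₂ - u₁`;
  -- those with `u₂ < u₁` are mirror images of these.
  have hlt : #{x ∈ F | x.1.1 < x.1.2} ≤ ∑ k ∈ Ioc 0 M, #{p ∈ s ×ˢ s | p.1 + k = p.2} ^ 2 := by
    simp only [sq, ← card_product, ← card_sigma]
    refine card_le_card_of_injOn (fun x => ⟨x.1.2 - x.1.1, x.1, x.2.2, x.2.1⟩) ?_ ?_
    · rintro ⟨⟨u₁, u₂⟩, v₁, v₂⟩ hx
      simp only [F, coe_filter, mem_filter, mem_product, Set.mem_ofPred_eq] at hx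
      obtain ⟨⟨⟨⟨hu₁, hu₂⟩, hv₁, hv₂⟩, heq⟩, hu⟩ := hx
      have := hs u₂ hu₂
      simp only [coe_sigma, Set.mem_sigma_iff, mem_Ioc, mem_product, mem_filter, mem_coe]
      exact ⟨⟨by omega, by omega⟩, ⟨⟨hu₁, hu₂⟩, by omega⟩, ⟨hv₂, hv₁⟩, by omega⟩
    · rintro x - y - h
      simp only [Sigma.mk.inj_iff, Prod.mk.injEq, heq_eq_eq] at h
      ext <;> simp [h]
  have hgt : #{x ∈ F | x.1.2 < x.1.1} ≤ #{x ∈ F | x.1.1 < x.1.2} := by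
    refine card_le_card_of_injOn (fun x => ((x.1.2, x.1.1), x.2.2, x.2.1)) ?_ ?_
    · rintro ⟨⟨u₁, u₂⟩, v₁, v₂⟩ hx
      simp only [F, coe_filter, mem_filter, mem_product, Set.mem_ofPred_eq] at hx ⊢
      obtain ⟨⟨⟨⟨hu₁, hu₂⟩, hv₁, hv₂⟩, heq⟩, hu⟩ := hx
      exact ⟨⟨⟨⟨hu₂, hu₁⟩, hv₂, hv₁⟩, heq.symm⟩, hu⟩
    · rintro x - y - h
      simp only [Prod.mk.injEq] at h
      ext <;> simp [h]
  have hsplit : #F ≤ #{x ∈ F | x.1.1 = x.1.2} + #{x ∈ F | x.1.1 < x.1.2}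
      + #{x ∈ F | x.1.2 < x.1.1} :=
    calc #F ≤ #({x ∈ F | x.1.1 = x.1.2} ∪ {x ∈ F | x.1.1 < x.1.2} ∪ {x ∈ F | x.1.2 < x.1.1}) :=
          card_le_card fun x hx => by simp only [mem_union, mem_filter, hx, true_and]; omega
      _ ≤ _ := (card_union_le _ _).trans (by gcongr; exact card_union_le _ _)
  calc s.addEnergy s = #F := rfl
    _ ≤ _ := by omega

theorem exists_eq_add_of_sq_add_eq_sq {a b k : ℕ} (hk : k ≠ 0) (h : a ^ 2 + k = b ^ 2) :
    ∃ d, 0 < d ∧ b = a + d ∧ k = d * (2 * a + d) := by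
  have hab : a < b := by
    by_contra! hba
    have := Nat.pow_le_pow_left hba 2
    omega
  obtain ⟨d, rfl⟩ := Nat.exists_eq_add_of_lt hab
  exact ⟨d + 1, d.succ_pos, rfl, by linarith⟩

theorem card_filter_sq_add_eq_le_card_divisors (t : Finset ℕ) {k : ℕ} (hk : k ≠ 0) :
    #{p ∈ t.image (· ^ 2) ×ˢ t.image (· ^ 2) | p.1 + k = p.2} ≤ #k.divisors := by
  refine card_le_card_of_injOn (fun p => p.2.sqrt - p.1.sqrt) ?_ ?_
  · rintro ⟨_, _⟩ hp
    simp only [coe_filter, mem_product, mem_image, Set.mem_ofPred_eq] at hp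
    obtain ⟨⟨⟨a, -, rfl⟩, ⟨b, -, rfl⟩⟩, h⟩ := hp
    obtain ⟨d, -, rfl, rfl⟩ := exists_eq_add_of_sq_add_eq_sq hk h
    simp only [Nat.sqrt_eq', add_tsub_cancel_left, mem_coe, Nat.mem_divisors]
    exact ⟨Dvd.intro _ rfl, hk⟩
  · rintro ⟨_, _⟩ hp ⟨_, _⟩ hq h
    simp only [coe_filter, mem_product, mem_image, Set.mem_ofPred_eq] at hp hq
    obtain ⟨⟨⟨a, -, rfl⟩, ⟨b, -, rfl⟩⟩, hab⟩ := hp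
    obtain ⟨⟨⟨a', -, rfl⟩, ⟨b', -, rfl⟩⟩, hab'⟩ := hq
    obtain ⟨d, hd, rfl, rfl⟩ := exists_eq_add_of_sq_add_eq_sq hk hab
    obtain ⟨d', -, rfl, hk'⟩ := exists_eq_add_of_sq_add_eq_sq hk hab'
    simp only [Nat.sqrt_eq', add_tsub_cancel_left] at h
    subst h
    obtain rfl : a = a' := by
      have := Nat.eq_of_mul_eq_mul_left hd hk'
      omega
    rfl

def squaresUpTo (N : ℕ) : Finset ℕ := (range (N + 1)).image (· ^ 2)

theorem card_squaresUpTo (N : ℕ) : #(squaresUpTo N) = N + 1 := by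
  rw [squaresUpTo, card_image_of_injective _ (Nat.pow_left_injective two_ne_zero), card_range]

theorem squaresUpTo_add_squaresUpTo_subset {N X : ℕ} (hN : 2 * N ^ 2 ≤ X) :
    ((squaresUpTo N + squaresUpTo N : Finset ℕ) : Set ℕ) ⊆ {n ∈ sumTwoSquares | n ≤ X} := by
  simp only [squaresUpTo, coe_add, coe_image, coe_range, Set.subset_def, Set.mem_add,
    Set.mem_image, Set.mem_Iio]
  rintro _ ⟨_, ⟨a, ha, rfl⟩, _, ⟨b, hb, rfl⟩, rfl⟩
  refine ⟨⟨a, b, by push_cast; ring⟩, ?_⟩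
  have := Nat.pow_le_pow_left (Nat.lt_succ_iff.mp ha) 2
  have := Nat.pow_le_pow_left (Nat.lt_succ_iff.mp hb) 2
  omega

theorem addEnergy_squaresUpTo_le {N X : ℕ} (hN : N ^ 2 ≤ X) :
    ((squaresUpTo N).addEnergy (squaresUpTo N) : ℝ) ≤ 3 * (N + 1) ^ 2 * (1 + log X) ^ 3 := by
  have hle : ∀ x ∈ squaresUpTo N, x ≤ N ^ 2 := by
    simp only [squaresUpTo, mem_image, mem_range, forall_exists_index, and_imp]
    rintro _ a ha rfl
    exact Nat.pow_le_pow_left (Nat.lt_succ_iff.mp ha) 2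
  have hcount : (squaresUpTo N).addEnergy (squaresUpTo N) ≤
      (N + 1) ^ 2 + 2 * ∑ k ∈ Ioc 0 (N ^ 2), #k.divisors ^ 2 := by
    refine (addEnergy_le_sq_card_add_sum_sq hle).trans ?_
    rw [card_squaresUpTo]
    gcongr with k hk
    exact card_filter_sq_add_eq_le_card_divisors _ (mem_Ioc.mp hk).1.ne'
  have hlog : log (N ^ 2 : ℕ) ≤ log X := by
    rcases (N ^ 2).eq_zero_or_pos with h | h
    · rw [h, Nat.cast_zero, log_zero]; exact log_natCast_nonneg X
    · exact log_le_log (by exact_mod_cast h) (by exact_mod_cast hN)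
  have hL : (1 : ℝ) ≤ (1 + log X) ^ 3 := one_le_pow₀ (by linarith [log_natCast_nonneg X])
  calc ((squaresUpTo N).addEnergy (squaresUpTo N) : ℝ)
      ≤ (N + 1) ^ 2 + 2 * ∑ k ∈ Ioc 0 (N ^ 2), (#k.divisors : ℝ) ^ 2 := by exact_mod_cast hcount
    _ ≤ (N + 1) ^ 2 + 2 * (N ^ 2 * (1 + log (N ^ 2 : ℕ)) ^ 3) := by
        gcongr; exact_mod_cast sum_card_divisors_sq_le (N ^ 2)
    _ ≤ (N + 1) ^ 2 * (1 + log X) ^ 3 + 2 * ((N + 1) ^ 2 * (1 + log X) ^ 3) := by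
        gcongr
        · exact le_mul_of_one_le_right (by positivity) hL
        · linarith [log_natCast_nonneg (N ^ 2)]
    _ = 3 * (N + 1) ^ 2 * (1 + log X) ^ 3 := by ring

theorem le_ncard_sumTwoSquares (X : ℕ) :
    (X : ℝ) / (6 * (1 + log X) ^ 3) ≤ {n ∈ sumTwoSquares | n ≤ X}.ncard := by
  set N := Nat.sqrt (X / 2)
  set Q := squaresUpTo N
  set A := {n ∈ sumTwoSquares | n ≤ X}
  have hN : 2 * N ^ 2 ≤ X := by have : N ^ 2 ≤ X / 2 := Nat.sqrt_le' _; omega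
  have hXN : (X : ℝ) ≤ 2 * (N + 1) ^ 2 := by
    have : X / 2 < (N + 1) ^ 2 := Nat.lt_succ_sqrt' _
    exact_mod_cast (by omega : X ≤ 2 * (N + 1) ^ 2)
  have hsumset : (#(Q + Q) : ℝ) ≤ A.ncard := by
    rw [← Set.ncard_coe_finset]
    exact_mod_cast Set.ncard_le_ncard (squaresUpTo_add_squaresUpTo_subset hN)
      ((Set.finite_Iic X).subset fun n hn => hn.2)
  have hCS : ((N + 1 : ℝ)) ^ 4 ≤ #(Q + Q) * Q.addEnergy Q := by
    have := le_card_add_mul_addEnergy Q Q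
    rw [card_squaresUpTo] at this
    exact_mod_cast (by linarith : (N + 1) ^ 4 ≤ #(Q + Q) * Q.addEnergy Q)
  have hsq : ((N + 1 : ℝ)) ^ 2 ≤ 3 * A.ncard * (1 + log X) ^ 3 := by
    refine le_of_mul_le_mul_right ?_ (by positivity : (0 : ℝ) < (N + 1) ^ 2)
    calc ((N + 1 : ℝ)) ^ 2 * (N + 1) ^ 2 = (N + 1) ^ 4 := by ring
      _ ≤ (#(Q + Q) : ℝ) * Q.addEnergy Q := hCS
      _ ≤ (A.ncard : ℝ) * (3 * (N + 1) ^ 2 * (1 + log X) ^ 3) := by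
          gcongr; exact addEnergy_squaresUpTo_le (by omega)
      _ = 3 * A.ncard * (1 + log X) ^ 3 * (N + 1) ^ 2 := by ring
  rw [div_le_iff₀ (by have := log_natCast_nonneg X; positivity)]
  linarith

theorem ncard_le_div_add_one_of_separated {s : Set ℕ} {X T : ℕ} (hT : 0 < T)
    (hX : ∀ n ∈ s, n ≤ X) (hs : ∀ n ∈ s, ∀ m ∈ s, n < m → n + T ≤ m) :
    s.ncard ≤ X / T + 1 := by
  have hlt : ∀ n ∈ s, ∀ m ∈ s, n < m → n / T < m / T := fun n hn m hm h =>
    calc n / T < n / T + 1 := Nat.lt_succ_self _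
      _ = (n + T) / T := (Nat.add_div_right n hT).symm
      _ ≤ m / T := Nat.div_le_div_right (hs n hn m hm h)
  calc s.ncard ≤ (Set.Iic (X / T)).ncard := by
        refine Set.ncard_le_ncard_of_injOn (· / T) (fun n hn => Nat.div_le_div_right (hX n hn)) ?_
        intro n hn m hm h
        by_contra hne
        rcases Nat.lt_or_gt_of_ne hne with h' | h'
        · exact (hlt n hn m hm h').ne h
        · exact (hlt m hm n hn h').ne h.symm
    _ = X / T + 1 := Set.ncard_Iic_nat _

theorem ncard_long_gaps_le {ε : ℝ} (hε : 0 ≤ ε) (X : ℕ) {Y : ℕ} (hY : 0 < Y) :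
    {n ∈ sumTwoSquares | n ≤ X ∧ (n : ℝ) ^ ε < (nextSumTwoSquares n : ℝ) - n}.ncard
      ≤ Y + (X / ⌈(Y : ℝ) ^ ε⌉₊ + 1) := by
  set S := {n ∈ sumTwoSquares | n ≤ X ∧ (n : ℝ) ^ ε < (nextSumTwoSquares n : ℝ) - n}
  set T := ⌈(Y : ℝ) ^ ε⌉₊
  have hT : 0 < T := Nat.ceil_pos.mpr (by positivity)
  have hsep : ∀ n ∈ S ∩ Set.Ici Y, ∀ m ∈ S ∩ Set.Ici Y, n < m → n + T ≤ m := by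
    rintro n ⟨⟨-, -, hgap⟩, hYn⟩ m ⟨⟨hm, -⟩, -⟩ hnm
    have hnext : nextSumTwoSquares n ≤ m := Nat.sInf_le ⟨hm, hnm⟩
    have hgap' : (Y : ℝ) ^ ε ≤ ((m - n : ℕ) : ℝ) :=
      calc (Y : ℝ) ^ ε ≤ (n : ℝ) ^ ε := by gcongr; exact_mod_cast hYn
        _ ≤ ((m - n : ℕ) : ℝ) := by
          rw [Nat.cast_sub hnm.le]
          have : (nextSumTwoSquares n : ℝ) ≤ m := by exact_mod_cast hnext
          linarith
    have := Nat.ceil_le.mpr hgap'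
    omega
  calc S.ncard = (S ∩ Set.Iio Y ∪ S ∩ Set.Ici Y).ncard := by
        rw [← Set.inter_union_distrib_left, Set.Iio_union_Ici, Set.inter_univ]
    _ ≤ (S ∩ Set.Iio Y).ncard + (S ∩ Set.Ici Y).ncard := Set.ncard_union_le _ _
    _ ≤ Y + (X / T + 1) := by
        gcongr
        · exact (Set.ncard_le_ncard Set.inter_subset_right (Set.finite_Iio Y)).trans
            (Set.ncard_Iio_nat Y).le
        · exact ncard_le_div_add_one_of_separated hT (fun n hn => hn.1.2.1) hsep

theorem isLittleO_one_add_log_pow_rpow (n : ℕ) {s : ℝ} (hs : 0 < s) :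
    (fun x : ℝ => (1 + log x) ^ n) =o[atTop] fun x => x ^ s := by
  refine IsBigO.trans_isLittleO (g := fun x => log x ^ (n : ℝ)) ?_
    (isLittleO_log_rpow_rpow_atTop n hs)
  refine IsBigO.of_bound (2 ^ n) ?_
  filter_upwards [tendsto_log_atTop.eventually_ge_atTop 1] with x hx
  rw [rpow_natCast, norm_pow, norm_pow, Real.norm_of_nonneg (by linarith),
    Real.norm_of_nonneg (by linarith), ← mul_pow]
  gcongr
  linarith

theorem isLittleO_rpow_div_one_add_log_pow {β : ℝ} (hβ : β < 1) (n : ℕ) :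
    (fun x : ℝ => x ^ β) =o[atTop] fun x => x / (1 + log x) ^ n := by
  have hpos : ∀ᶠ x : ℝ in atTop, 0 < x ∧ 0 < 1 + log x := by
    filter_upwards [eventually_gt_atTop 0, tendsto_log_atTop.eventually_gt_atTop (-1)]
      with x hx hlog
    exact ⟨hx, by linarith⟩
  rw [isLittleO_iff_tendsto' (hpos.mono fun x hx h =>
    absurd h (div_ne_zero hx.1.ne' (pow_ne_zero _ hx.2.ne')))]
  refine ((isLittleO_one_add_log_pow_rpow n (sub_pos.mpr hβ)).tendsto_div_nhds_zero).congr' ?_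
  filter_upwards [hpos] with x ⟨hx, hlog⟩
  rw [rpow_sub hx, rpow_one]
  field_simp

theorem isBigO_ncard_long_gaps {ε : ℝ} (hε : 0 < ε) :
    (fun X : ℕ =>
        ({n ∈ sumTwoSquares | n ≤ X ∧ (n : ℝ) ^ ε < (nextSumTwoSquares n : ℝ) - n}.ncard : ℝ))
      =O[atTop] fun X => (X : ℝ) ^ max (1 / 2) (1 - ε / 2) := by
  set β := max (1 / 2) (1 - ε / 2)
  refine IsBigO.of_bound 4 ?_
  filter_upwards [eventually_ge_atTop 1] with X hX
  have hX1 : (1 : ℝ) ≤ X := by exact_mod_cast hX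
  have hX0 : (0 : ℝ) < X := by linarith
  set Y := ⌈√(X : ℝ)⌉₊
  have hY : 0 < Y := Nat.ceil_pos.mpr (by positivity)
  have hYε : (X : ℝ) ^ (ε / 2) ≤ (Y : ℝ) ^ ε := by
    rw [show ε / 2 = 1 / 2 * ε by ring, rpow_mul hX0.le, ← sqrt_eq_rpow]
    gcongr
    exact Nat.le_ceil _
  have hfar : ((X / ⌈(Y : ℝ) ^ ε⌉₊ : ℕ) : ℝ) ≤ (X : ℝ) ^ β :=
    calc ((X / ⌈(Y : ℝ) ^ ε⌉₊ : ℕ) : ℝ) ≤ X / ⌈(Y : ℝ) ^ ε⌉₊ := Nat.cast_div_le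
      _ ≤ X / (X : ℝ) ^ (ε / 2) := by
          gcongr
          exact hYε.trans (Nat.le_ceil _)
      _ = (X : ℝ) ^ (1 - ε / 2) := by rw [rpow_sub hX0, rpow_one]
      _ ≤ (X : ℝ) ^ β := rpow_le_rpow_of_exponent_le hX1 (le_max_right _ _)
  have hone : (1 : ℝ) ≤ (X : ℝ) ^ β := one_le_rpow hX1 (by positivity)
  have hnear : (Y : ℝ) ≤ 2 * (X : ℝ) ^ β := by
    have hceil : (Y : ℝ) < √X + 1 := Nat.ceil_lt_add_one (sqrt_nonneg _)
    have hsqrt : √(X : ℝ) ≤ (X : ℝ) ^ β := by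
      rw [sqrt_eq_rpow]; exact rpow_le_rpow_of_exponent_le hX1 (le_max_left _ _)
    linarith
  rw [norm_of_nonneg (by positivity), norm_of_nonneg (by positivity)]
  have := ncard_long_gaps_le hε.le X hY
  calc _ ≤ ((Y + (X / ⌈(Y : ℝ) ^ ε⌉₊ + 1) : ℕ) : ℝ) := by exact_mod_cast this
    _ ≤ 4 * (X : ℝ) ^ β := by push_cast; linarith

theorem isBigO_div_log_pow_ncard_sumTwoSquares :
    (fun X : ℕ => (X : ℝ) / (1 + log X) ^ 3) =O[atTop]
      fun X => ({n ∈ sumTwoSquares | n ≤ X}.ncard : ℝ) := by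
  refine IsBigO.of_bound 6 (Eventually.of_forall fun X => ?_)
  have hL : 0 < (1 + log X) ^ 3 := by have := log_natCast_nonneg X; positivity
  have := le_ncard_sumTwoSquares X
  rw [norm_of_nonneg (by positivity), norm_of_nonneg (by positivity)]
  rw [div_le_iff₀ (by positivity)] at this
  rw [div_le_iff₀ hL]
  linarith

theorem ncard_short_gaps_div_eq_one_sub (ε : ℝ) (X : ℕ) :
    ({n ∈ sumTwoSquares | n ≤ X ∧ (nextSumTwoSquares n : ℝ) - n ≤ (n : ℝ) ^ ε}.ncard : ℝ) /
        {n ∈ sumTwoSquares | n ≤ X}.ncard =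
      1 - ({n ∈ sumTwoSquares | n ≤ X ∧ (n : ℝ) ^ ε < (nextSumTwoSquares n : ℝ) - n}.ncard : ℝ) /
        {n ∈ sumTwoSquares | n ≤ X}.ncard := by
  set A := {n ∈ sumTwoSquares | n ≤ X}
  set short := {n | (nextSumTwoSquares n : ℝ) - n ≤ (n : ℝ) ^ ε}
  have hfin : A.Finite := (Set.finite_Iic X).subset fun n hn => hn.2
  have hA : (0 : ℝ) < A.ncard := by
    exact_mod_cast (Set.ncard_pos hfin).mpr ⟨0, ⟨0, 0, by norm_num⟩, Nat.zero_le X⟩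
  have hshort : {n ∈ sumTwoSquares | n ≤ X ∧ (nextSumTwoSquares n : ℝ) - n ≤ (n : ℝ) ^ ε} =
      A ∩ short :=
    Set.ext fun _ => and_assoc.symm
  have hlong : {n ∈ sumTwoSquares | n ≤ X ∧ (n : ℝ) ^ ε < (nextSumTwoSquares n : ℝ) - n} =
      A \ short :=
    Set.ext fun _ => by simp only [A, short, Set.mem_sdiff, Set.mem_ofPred_eq, not_le, and_assoc]
  rw [hshort, hlong, eq_sub_iff_add_eq, ← add_div, ← Nat.cast_add,
    Set.ncard_inter_add_ncard_sdiff_eq_ncard A short hfin, div_self hA.ne']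

/-- Along a density one subsequence of the set 𝒩 of sums of two squares, the gap
to the next element of 𝒩 is O(n^ε). -/
theorem gaps_sum_two_squares (ε : ℝ) (hε : 0 < ε) :
    ∃ Cg : ℝ, 0 < Cg ∧
      Tendsto (fun X : ℕ =>
        (({n ∈ sumTwoSquares | n ≤ X ∧
            ((sInf {m ∈ sumTwoSquares | n < m} : ℕ) : ℝ) - (n : ℝ) ≤ Cg * (n : ℝ) ^ ε}).ncard : ℝ) /
        (({n ∈ sumTwoSquares | n ≤ X}).ncard : ℝ)) atTop (nhds 1) := by
  refine ⟨1, one_pos, ?_⟩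
  simp only [one_mul]
  have hβ : max (1 / 2) (1 - ε / 2) < 1 := max_lt (by norm_num) (by linarith)
  have hlong := (isBigO_ncard_long_gaps hε).trans_isLittleO <|
    ((isLittleO_rpow_div_one_add_log_pow hβ 3).comp_tendsto
      tendsto_natCast_atTop_atTop).trans_isBigO isBigO_div_log_pow_ncard_sumTwoSquares
  have := tendsto_const_nhds (x := (1 : ℝ)).sub hlong.tendsto_div_nhds_zero
  rw [sub_zero] at this
  exact this.congr fun X => (ncard_short_gaps_div_eq_one_sub ε X).symm
end

section
/- Fix ζ ∈ ℤ² \ {0} and 0 < δ < 1/4, and let λ > 0 with λ^δ ≥ 4|ζ|². Suppose ξ ∈ ℤ² satisfies |⟨ξ, ζ⟩| > 2|ξ|^{2δ} and ||ξ|² − λ| ≤ λ^δ. Then ||ξ + ζ|² − λ| > λ^δ. -/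
/-!
Expanding, `|ξ + ζ|² - λ = 2⟨ξ, ζ⟩ + (|ξ|² - λ) + |ζ|²`, so it suffices that `2|⟨ξ, ζ⟩|` beats
`2λ^δ + |ζ|²`. As `|ζ|² ≥ 1`, the conditions `λ^δ ≥ 4` and `δ ≤ 1/4` give `λ ≥ (λ^δ)^4 ≥ 64 λ^δ`,
so `|ξ|² ≥ 63λ/64` and `2|⟨ξ, ζ⟩| > 4|ξ|^{2δ} ≥ (63/16) λ^δ`, which is more than enough.
-/

open Real

theorem Int.one_le_sq_add_sq {p : ℤ × ℤ} (hp : p ≠ 0) : 1 ≤ p.1 ^ 2 + p.2 ^ 2 := by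
  by_contra! h
  have h1 : p.1 = 0 := by nlinarith [sq_nonneg p.1, sq_nonneg p.2]
  have h2 : p.2 = 0 := by nlinarith [sq_nonneg p.1, sq_nonneg p.2]
  exact hp (Prod.ext h1 h2)

theorem Real.sixtyFour_mul_rpow_le_self {x δ : ℝ} (hx : 0 ≤ x) (hδ0 : 0 ≤ δ) (hδ : δ ≤ 1 / 4)
    (h : 4 ≤ x ^ δ) : 64 * x ^ δ ≤ x := by
  have hx1 : 1 ≤ x := by
    by_contra! hx1
    linarith [rpow_le_one hx hx1.le hδ0]
  have hpow : (x ^ δ) ^ 4 ≤ x := by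
    rw [← rpow_mul_natCast hx]
    simpa using rpow_le_rpow_of_exponent_le hx1 (by norm_num; linarith : δ * (4 : ℕ) ≤ 1)
  nlinarith [pow_le_pow_left₀ (by norm_num) h 3]

theorem Real.mul_rpow_le_rpow_of_le {c x y δ : ℝ} (hc0 : 0 ≤ c) (hc1 : c ≤ 1) (hx : 0 ≤ x)
    (hxy : c * x ≤ y) (hδ0 : 0 ≤ δ) (hδ1 : δ ≤ 1) : c * x ^ δ ≤ y ^ δ :=
  calc c * x ^ δ ≤ c ^ δ * x ^ δ := by
        gcongr; exact self_le_rpow_of_le_one hc0 hc1 hδ1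
    _ = (c * x) ^ δ := (mul_rpow hc0 hx).symm
    _ ≤ y ^ δ := by gcongr

theorem abs_sub_abs_sub_le_abs_add_add {α : Type*} [AddCommGroup α] [LinearOrder α]
    [IsOrderedAddMonoid α] (a b c : α) : |a| - |b| - |c| ≤ |a + b + c| := by
  rw [sub_sub, sub_le_iff_le_add, ← add_assoc]
  simpa [abs_neg, add_assoc] using abs_add_three (a + b + c) (-b) (-c)

/-- If λ^δ ≥ 4|ζ|², ξ ∉ S_ζ (i.e. |⟨ξ,ζ⟩| > 2|ξ|^{2δ}) and ||ξ|² − λ| ≤ λ^δ,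
then ||ξ+ζ|² − λ| > λ^δ. -/
theorem shifted_norm_far (δ : ℝ) (hδ0 : 0 < δ) (hδ : δ < 1/4)
    (lam : ℝ) (hlam : 0 < lam) (ζ ξ : ℤ × ℤ) (hζ : ζ ≠ 0)
    (hbig : 4 * ((ζ.1 ^ 2 + ζ.2 ^ 2 : ℤ) : ℝ) ≤ lam ^ δ)
    (hip : 2 * ((ξ.1 ^ 2 + ξ.2 ^ 2 : ℤ) : ℝ) ^ δ < |((ξ.1 * ζ.1 + ξ.2 * ζ.2 : ℤ) : ℝ)|)
    (hnear : |((ξ.1 ^ 2 + ξ.2 ^ 2 : ℤ) : ℝ) - lam| ≤ lam ^ δ) :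
    lam ^ δ < |(((ξ.1 + ζ.1) ^ 2 + (ξ.2 + ζ.2) ^ 2 : ℤ) : ℝ) - lam| := by
  set N : ℝ := ((ξ.1 ^ 2 + ξ.2 ^ 2 : ℤ) : ℝ)
  set Z : ℝ := ((ζ.1 ^ 2 + ζ.2 ^ 2 : ℤ) : ℝ)
  set P : ℝ := ((ξ.1 * ζ.1 + ξ.2 * ζ.2 : ℤ) : ℝ)
  have hZ : 1 ≤ Z := by simp only [Z]; exact_mod_cast Int.one_le_sq_add_sq hζ
  have hsmall : 64 * lam ^ δ ≤ lam :=
    sixtyFour_mul_rpow_le_self hlam.le hδ0.le hδ.le (by linarith)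
  have hN : 63 / 64 * lam ^ δ ≤ N ^ δ :=
    mul_rpow_le_rpow_of_le (by norm_num) (by norm_num) hlam.le
      (by linarith [(abs_le.mp hnear).1]) hδ0.le (by linarith)
  have hexpand : (((ξ.1 + ζ.1) ^ 2 + (ξ.2 + ζ.2) ^ 2 : ℤ) : ℝ) - lam = 2 * P + (N - lam) + Z := by
    simp only [N, P, Z]; push_cast; ring
  rw [hexpand]
  calc lam ^ δ < |2 * P| - |N - lam| - |Z| := by
        rw [abs_mul, abs_two, abs_of_nonneg (by linarith : 0 ≤ Z)]; linarith
    _ ≤ |2 * P + (N - lam) + Z| := abs_sub_abs_sub_le_abs_add_add _ _ _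
end

section
/- Let λ > 0, L = λ^δ with 0 < δ < 1, and ε > 0. Assume #{ξ ∈ ℤ² : |ξ|² = n} ≪ n^ε for all n ≥ 1. Then the tail sum Σ_{ξ ∈ ℤ², ||ξ|² − λ| > L} 1/(|ξ|² − λ)² ≪ λ^ε / L. -/
/-!
Split the lattice points according to `q = |ξ|²`. Where `q > 2λ` we have
`1 / (q - λ)² ≤ 4 λ^(-δ) q^(-(2 - δ))`, and `∑ ξ, |ξ|^(-(4 - 2δ))` converges because `4 - 2δ > 2`.
Where `q ≤ 2λ`, group the points by the value `n = q`: each fibre has `r₂(n) ≪ λ^ε` points, and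
`∑_{n ∈ ℤ, |n - λ| > L} 1 / (n - λ)² ≤ 4 / L` by comparison with a telescoping sum.
-/

open Real Finset

def sqNorm (ξ : ℤ × ℤ) : ℤ := ξ.1 ^ 2 + ξ.2 ^ 2

def SumTwoSquaresRepBound (Cr ε : ℝ) : Prop :=
  ∀ n : ℕ, 1 ≤ n → ({ξ : ℤ × ℤ | sqNorm ξ = n}.ncard : ℝ) ≤ Cr * (n : ℝ) ^ ε

theorem sum_one_div_sub_sq_le_of_le {a b : ℝ} (hb : 1 ≤ b) (A : Finset ℤ)
    (hA : ∀ n ∈ A, b ≤ n - a) : ∑ n ∈ A, 1 / ((n : ℝ) - a) ^ 2 ≤ 2 / b := by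
  induction A using Finset.induction_on_min generalizing b with
  | empty => simp only [sum_empty]; positivity
  | insert m A hm ih =>
    have hbm : b ≤ m - a := hA m (mem_insert_self m A)
    have hrest : ∑ n ∈ A, 1 / ((n : ℝ) - a) ^ 2 ≤ 2 / (m - a + 1) :=
      ih (by linarith) fun n hn => by
        have : (m : ℝ) + 1 ≤ n := by exact_mod_cast hm n hn
        linarith
    -- `1 / x ^ 2 ≤ 2 / x - 2 / (x + 1)` for `x ≥ 1`, so the sum telescopes
    have hstep : 1 / ((m : ℝ) - a) ^ 2 + 2 / (m - a + 1) ≤ 2 / (m - a) := by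
      set x : ℝ := m - a
      have hx : 0 < x := by linarith
      rw [div_add_div _ _ (by positivity) (by positivity), div_le_div_iff₀ (by positivity) hx]
      nlinarith
    rw [sum_insert fun h => (hm m h).false]
    calc _ ≤ 1 / ((m : ℝ) - a) ^ 2 + 2 / (m - a + 1) := by gcongr
      _ ≤ 2 / (m - a) := hstep
      _ ≤ 2 / b := by gcongr

theorem sum_one_div_sub_sq_le_of_lt_abs {a L : ℝ} (hL : 1 ≤ L) (A : Finset ℤ)
    (hA : ∀ n ∈ A, L < |(n : ℝ) - a|) : ∑ n ∈ A, 1 / ((n : ℝ) - a) ^ 2 ≤ 4 / L := by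
  rw [← sum_filter_add_sum_filter_not A (fun n : ℤ => a < (n : ℝ))]
  have habove : ∑ n ∈ A.filter (fun n : ℤ => a < n), 1 / ((n : ℝ) - a) ^ 2 ≤ 2 / L := by
    refine sum_one_div_sub_sq_le_of_le hL _ fun n hn => ?_
    obtain ⟨hnA, han⟩ := mem_filter.1 hn
    have := hA n hnA
    rw [abs_of_pos (by linarith)] at this
    linarith
  have hbelow : ∑ n ∈ A.filter (fun n : ℤ => ¬a < n), 1 / ((n : ℝ) - a) ^ 2 ≤ 2 / L := by
    have := sum_one_div_sub_sq_le_of_le (a := -a) hL ((A.filter fun n : ℤ => ¬a < (n : ℝ)).map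
      (Equiv.neg ℤ).toEmbedding) fun n hn => by
        obtain ⟨m, hm, rfl⟩ := mem_map.1 hn
        obtain ⟨hmA, ham⟩ := mem_filter.1 hm
        have := hA m hmA
        rw [abs_of_nonpos (by linarith [not_lt.1 ham])] at this
        simp only [Equiv.coe_toEmbedding, Equiv.neg_apply, Int.cast_neg]
        linarith
    rw [sum_map] at this
    convert this using 2 with n
    simp only [Equiv.coe_toEmbedding, Equiv.neg_apply, Int.cast_neg]
    ring
  linarith [show (4 : ℝ) / L = 2 / L + 2 / L by ring]

theorem sum_comp_le_mul_sum_image {α β : Type*} [DecidableEq β] (s : Finset α) (g : α → β)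
    (f : β → ℝ) (hf : ∀ b ∈ s.image g, 0 ≤ f b) {M : ℝ}
    (hM : ∀ b ∈ s.image g, (#{a ∈ s | g a = b} : ℝ) ≤ M) :
    ∑ a ∈ s, f (g a) ≤ M * ∑ b ∈ s.image g, f b := by
  rw [sum_comp, mul_sum]
  gcongr with b hb
  rw [nsmul_eq_mul]
  exact mul_le_mul_of_nonneg_right (hM b hb) (hf b hb)

theorem finite_setOf_sqNorm_eq (n : ℤ) : {ξ : ℤ × ℤ | sqNorm ξ = n}.Finite := by
  refine ((Set.finite_Icc (-n) n).prod (Set.finite_Icc (-n) n)).subset ?_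
  rintro ⟨x, y⟩ (h : x ^ 2 + y ^ 2 = n)
  have := Int.le_self_sq x
  have := Int.le_self_sq (-x)
  have := Int.le_self_sq y
  have := Int.le_self_sq (-y)
  simp only [Set.mem_prod, Set.mem_Icc]
  refine ⟨⟨?_, ?_⟩, ?_, ?_⟩ <;> nlinarith

theorem sqNorm_eq_zero_iff {ξ : ℤ × ℤ} : sqNorm ξ = 0 ↔ ξ = 0 := by
  simp [sqNorm, Prod.ext_iff, add_eq_zero_iff_of_nonneg, sq_nonneg]

theorem summable_norm_rpow_neg {k : ℝ} (hk : 2 < k) :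
    Summable fun ξ : ℤ × ℤ => ‖ξ‖ ^ (-k) := by
  have := EisensteinSeries.summable_one_div_norm_rpow hk
  rw [← (finTwoArrowEquiv ℤ).symm.summable_iff] at this
  convert this using 3 with ξ
  simp [Prod.norm_def, Pi.norm_def, Fin.univ_succ]

theorem one_div_sub_sq_le_rpow {q lam δ : ℝ} (hlam : 0 < lam) (hδ : 0 ≤ δ) (hq : 2 * lam < q) :
    1 / (q - lam) ^ 2 ≤ 4 * lam ^ (-δ) * q ^ (-(2 - δ)) := by
  have hq0 : 0 < q := by linarith
  have hqlam : 0 < q - lam := by linarith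
  calc 1 / (q - lam) ^ 2 ≤ 4 / q ^ 2 := by
        rw [div_le_div_iff₀ (by positivity) (by positivity)]
        nlinarith
    _ = 4 * q ^ (-δ) * q ^ (-(2 - δ)) := by
        rw [mul_assoc, ← rpow_add hq0, show -δ + -(2 - δ) = -2 by ring, rpow_neg hq0.le,
          rpow_two, div_eq_mul_inv]
    _ ≤ 4 * lam ^ (-δ) * q ^ (-(2 - δ)) := by
        gcongr 4 * ?_ * _
        exact rpow_le_rpow_of_nonpos hlam (by linarith) (by linarith)

theorem sqNorm_rpow_neg_le_norm_rpow {ξ : ℤ × ℤ} (hξ : ξ ≠ 0) {s : ℝ} (hs : 0 ≤ s) :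
    (sqNorm ξ : ℝ) ^ (-s) ≤ ‖ξ‖ ^ (-(2 * s)) := by
  have hnorm : ‖ξ‖ ^ 2 ≤ sqNorm ξ := by
    rw [Prod.norm_def, Int.norm_eq_abs, Int.norm_eq_abs, sqNorm]
    push_cast
    rcases max_cases |(ξ.1 : ℝ)| |(ξ.2 : ℝ)| with ⟨h, -⟩ | ⟨h, -⟩ <;>
      rw [h, sq_abs] <;> nlinarith [sq_nonneg (ξ.1 : ℝ), sq_nonneg (ξ.2 : ℝ)]
  rw [neg_mul_eq_mul_neg, rpow_mul (norm_nonneg ξ), rpow_two]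
  exact rpow_le_rpow_of_nonpos (by positivity) hnorm (by linarith)

theorem sum_one_div_sqNorm_sub_sq_le_of_two_mul_lt {δ lam : ℝ} (hδ0 : 0 ≤ δ) (hδ1 : δ < 1)
    (hlam : 0 < lam) (U : Finset (ℤ × ℤ)) (hU : ∀ ξ ∈ U, 2 * lam < sqNorm ξ) :
    ∑ ξ ∈ U, 1 / ((sqNorm ξ : ℝ) - lam) ^ 2 ≤
      4 * lam ^ (-δ) * ∑' ξ : ℤ × ℤ, ‖ξ‖ ^ (-(2 * (2 - δ))) := by
  calc ∑ ξ ∈ U, 1 / ((sqNorm ξ : ℝ) - lam) ^ 2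
      ≤ ∑ ξ ∈ U, 4 * lam ^ (-δ) * ‖ξ‖ ^ (-(2 * (2 - δ))) := by
        refine sum_le_sum fun ξ hξ => ?_
        have hq := hU ξ hξ
        have hξ0 : ξ ≠ 0 := by
          rintro rfl
          simp only [sqNorm, Prod.fst_zero, Prod.snd_zero] at hq
          norm_num at hq
          linarith
        grw [one_div_sub_sq_le_rpow hlam hδ0 hq, sqNorm_rpow_neg_le_norm_rpow hξ0 (by linarith)]
    _ = 4 * lam ^ (-δ) * ∑ ξ ∈ U, ‖ξ‖ ^ (-(2 * (2 - δ))) := by rw [mul_sum]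
    _ ≤ 4 * lam ^ (-δ) * ∑' ξ : ℤ × ℤ, ‖ξ‖ ^ (-(2 * (2 - δ))) := by
        gcongr
        exact (summable_norm_rpow_neg (by linarith)).sum_le_tsum U fun _ _ => by positivity

theorem ncard_sqNorm_eq_le {ε Cr X : ℝ} (hε : 0 ≤ ε) (hCr : 0 ≤ Cr)
    (hr : SumTwoSquaresRepBound Cr ε) {n : ℤ} (hn : 0 ≤ n) (hnX : (n : ℝ) ≤ X) :
    ({ξ : ℤ × ℤ | sqNorm ξ = n}.ncard : ℝ) ≤ Cr * X ^ ε + 1 := by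
  rcases hn.eq_or_lt with rfl | hpos
  · have hX : 0 ≤ X := by exact_mod_cast hnX
    simp only [sqNorm_eq_zero_iff, Set.ofPred_eq_eq_singleton, Set.ncard_singleton]
    push_cast
    have : 0 ≤ Cr * X ^ ε := by positivity
    linarith
  · lift n to ℕ using hn
    have : Cr * (n : ℝ) ^ ε ≤ Cr * X ^ ε := by gcongr; exact_mod_cast hnX
    linarith [hr n (by omega)]

theorem sum_one_div_sqNorm_sub_sq_le_of_le {ε Cr lam L X : ℝ} (hε : 0 ≤ ε) (hCr : 0 ≤ Cr)
    (hr : SumTwoSquaresRepBound Cr ε) (hL : 1 ≤ L) (hX : 0 ≤ X)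
    (U : Finset (ℤ × ℤ)) (hU : ∀ ξ ∈ U, L < |(sqNorm ξ : ℝ) - lam| ∧ (sqNorm ξ : ℝ) ≤ X) :
    ∑ ξ ∈ U, 1 / ((sqNorm ξ : ℝ) - lam) ^ 2 ≤ (Cr * X ^ ε + 1) * (4 / L) := by
  have hfiber : ∀ n ∈ U.image sqNorm, (#{ξ ∈ U | sqNorm ξ = n} : ℝ) ≤ Cr * X ^ ε + 1 := by
    intro n hn
    obtain ⟨ξ, hξ, rfl⟩ := mem_image.1 hn
    refine le_trans ?_ (ncard_sqNorm_eq_le hε hCr hr (by unfold sqNorm; positivity) (hU ξ hξ).2)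
    rw [← Set.ncard_coe_finset]
    exact_mod_cast Set.ncard_le_ncard (fun η hη => (mem_filter.1 hη).2)
      (finite_setOf_sqNorm_eq _)
  calc ∑ ξ ∈ U, 1 / ((sqNorm ξ : ℝ) - lam) ^ 2
      ≤ (Cr * X ^ ε + 1) * ∑ n ∈ U.image sqNorm, 1 / ((n : ℝ) - lam) ^ 2 :=
        sum_comp_le_mul_sum_image U sqNorm (fun n : ℤ => 1 / ((n : ℝ) - lam) ^ 2)
          (fun _ _ => by positivity) hfiber
    _ ≤ (Cr * X ^ ε + 1) * (4 / L) := by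
        gcongr
        refine sum_one_div_sub_sq_le_of_lt_abs hL _ fun n hn => ?_
        obtain ⟨ξ, hξ, rfl⟩ := mem_image.1 hn
        exact (hU ξ hξ).1

theorem sum_one_div_sqNorm_sub_sq_le {δ ε Cr lam : ℝ} (hδ0 : 0 ≤ δ) (hδ1 : δ < 1) (hε : 0 ≤ ε)
    (hCr : 0 ≤ Cr) (hr : SumTwoSquaresRepBound Cr ε) (hlam : 1 ≤ lam) (U : Finset (ℤ × ℤ))
    (hU : ∀ ξ ∈ U, lam ^ δ < |(sqNorm ξ : ℝ) - lam|) :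
    ∑ ξ ∈ U, 1 / ((sqNorm ξ : ℝ) - lam) ^ 2 ≤
      (4 * ∑' ξ : ℤ × ℤ, ‖ξ‖ ^ (-(2 * (2 - δ))) + 4 * Cr * 2 ^ ε + 4) * lam ^ ε / lam ^ δ := by
  have hlam0 : 0 < lam := by linarith
  have hL : 1 ≤ lam ^ δ := one_le_rpow hlam hδ0
  have hε1 : 1 ≤ lam ^ ε := one_le_rpow hlam hε
  have hfar := sum_one_div_sqNorm_sub_sq_le_of_two_mul_lt hδ0 hδ1 hlam0
    (U.filter fun ξ => 2 * lam < sqNorm ξ) fun ξ hξ => (mem_filter.1 hξ).2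
  have hnear := sum_one_div_sqNorm_sub_sq_le_of_le hε hCr hr hL (by positivity : 0 ≤ 2 * lam)
    (U.filter fun ξ => ¬2 * lam < sqNorm ξ)
    fun ξ hξ => ⟨hU ξ (mem_filter.1 hξ).1, not_lt.1 (mem_filter.1 hξ).2⟩
  set C := ∑' ξ : ℤ × ℤ, ‖ξ‖ ^ (-(2 * (2 - δ)))
  have hC : 0 ≤ C := tsum_nonneg fun _ => by positivity
  rw [← sum_filter_add_sum_filter_not U fun ξ => 2 * lam < (sqNorm ξ : ℝ)]
  rw [mul_rpow zero_le_two hlam0.le] at hnear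
  rw [rpow_neg hlam0.le] at hfar
  calc _ ≤ 4 * (lam ^ δ)⁻¹ * C + (Cr * (2 ^ ε * lam ^ ε) + 1) * (4 / lam ^ δ) :=
        add_le_add hfar hnear
    _ ≤ (4 * C + 4 * Cr * 2 ^ ε + 4) * lam ^ ε / lam ^ δ := by
        field_simp
        nlinarith

/-- Tail bound for the Green's function: assuming r₂(n) ≪ n^ε, the sum of
1/(|ξ|²−λ)² over lattice points with ||ξ|²−λ| > L = λ^δ is ≪ λ^ε/L. -/
theorem greens_tail_bound (δ ε Cr : ℝ) (hδ0 : 0 < δ) (hδ : δ < 1) (hε : 0 < ε) (hCr : 0 < Cr)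
    (hr : ∀ n : ℕ, 1 ≤ n →
      (({ξ : ℤ × ℤ | ξ.1 ^ 2 + ξ.2 ^ 2 = (n : ℤ)}).ncard : ℝ) ≤ Cr * (n : ℝ) ^ ε) :
    ∃ K : ℝ, 0 < K ∧ ∀ lam : ℝ, 1 ≤ lam →
      (∑' ξ : {ξ : ℤ × ℤ // lam ^ δ < |((ξ.1 ^ 2 + ξ.2 ^ 2 : ℤ) : ℝ) - lam|},
          1 / (((ξ.val.1 ^ 2 + ξ.val.2 ^ 2 : ℤ) : ℝ) - lam) ^ 2)
        ≤ K * lam ^ ε / lam ^ δ := by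
  have hC : 0 ≤ ∑' ξ : ℤ × ℤ, ‖ξ‖ ^ (-(2 * (2 - δ))) := tsum_nonneg fun _ => by positivity
  refine ⟨4 * ∑' ξ : ℤ × ℤ, ‖ξ‖ ^ (-(2 * (2 - δ))) + 4 * Cr * 2 ^ ε + 4, by positivity,
    fun lam hlam => Real.tsum_le_of_sum_le (fun ξ => by positivity) fun T => ?_⟩
  have := sum_one_div_sqNorm_sub_sq_le hδ0.le hδ hε.le hCr.le hr hlam
    (T.map (Function.Embedding.subtype _)) fun ξ hξ => by
      obtain ⟨η, -, rfl⟩ := mem_map.1 hξ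
      exact η.2
  rwa [sum_map] at this
end

section
/- Let λ ∈ ℝ, λ ∉ {|ξ|² : ξ ∈ ℤ²}, and let x₀ = (α₁, α₂) ∈ ℝ² with d₁, d₂ ∈ ℂ, |d₁|² + |d₂|² = 1, |d₂|² ≥ 1/2. Suppose there exists ξ = (ξ₁, ξ₂) ∈ ℤ² with ξ₁ ≠ 0, | |ξ|² − λ | ≤ B, and |sin(ξ₁ α₁)| ≥ s > 0. Then Σ_{η ∈ ℤ²} |d₁ + d₂ e^{i⟨η, x₀⟩}|² / (|η|² − λ)² ≥ s²/(2B²). -/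
/-!
Keep only the two terms η = ξ and η = (-ξ₁, ξ₂). They share the denominator (|ξ|² - λ)² ≤ B²,
and their numerators are |d₁ + z₁|², |d₁ + z₂|² with z₁ - z₂ = d₂ (e^{i⟨ξ,x₀⟩} - e^{i⟨(-ξ₁,ξ₂),x₀⟩})
of modulus 2|d₂||sin(ξ₁α₁)|. Since |z₁ - z₂|² ≤ 2(|d₁ + z₁|² + |d₁ + z₂|²), the two numerators add
up to at least 2|d₂|² sin²(ξ₁α₁) ≥ s². The series converges because its terms are O(|η|⁻⁴).
-/

open Real Complex Filter Asymptotics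

lemma summable_norm_rpow_neg_four :
    Summable fun η : ℤ × ℤ => ‖η‖ ^ (-4 : ℝ) := by
  have h := (finTwoArrowEquiv ℤ).symm.summable_iff.mpr
    (EisensteinSeries.summable_one_div_norm_rpow (by norm_num : (2 : ℝ) < 4))
  refine h.congr fun η => ?_
  simp [EisensteinSeries.norm_eq_max_natAbs, Prod.norm_def, Int.norm_eq_abs]

lemma sq_norm_le_intNormSq (η : ℤ × ℤ) : ‖η‖ ^ 2 ≤ ((η.1 ^ 2 + η.2 ^ 2 : ℤ) : ℝ) := by
  rw [Prod.norm_def, Int.norm_eq_abs, Int.norm_eq_abs]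
  push_cast
  rcases max_choice |(η.1 : ℝ)| |(η.2 : ℝ)| with h | h <;> rw [h, sq_abs] <;> nlinarith

lemma summable_inv_sq_intNormSq_sub (lam : ℝ) :
    Summable fun η : ℤ × ℤ => ((((η.1 ^ 2 + η.2 ^ 2 : ℤ) : ℝ) - lam) ^ 2)⁻¹ := by
  refine summable_of_isBigO summable_norm_rpow_neg_four (IsBigO.of_bound 4 ?_)
  have hnorm : Tendsto (fun η : ℤ × ℤ => ‖η‖) cofinite atTop := by
    rw [← cocompact_eq_cofinite]
    exact tendsto_norm_cocompact_atTop
  filter_upwards [hnorm.eventually_ge_atTop (2 * |lam| + 1)] with η hη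
  have hr : 0 < ‖η‖ := by linarith [abs_nonneg lam]
  have hD : ‖η‖ ^ 2 / 2 ≤ ((η.1 ^ 2 + η.2 ^ 2 : ℤ) : ℝ) - lam := by
    nlinarith [sq_norm_le_intNormSq η, le_abs_self lam]
  have hpos : 0 < ((η.1 ^ 2 + η.2 ^ 2 : ℤ) : ℝ) - lam := by linarith [pow_pos hr 2]
  rw [Real.norm_of_nonneg (by positivity), Real.norm_of_nonneg (by positivity),
    Real.rpow_neg hr.le, ← div_eq_mul_inv, le_div_iff₀ (by positivity), ← div_eq_inv_mul,
    div_le_iff₀ (by positivity)]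
  norm_cast
  nlinarith [pow_le_pow_left₀ (by positivity) hD 2]

lemma norm_sub_sq_le_two_mul_norm_add_sq {E : Type*} [SeminormedAddCommGroup E] (a x y : E) :
    ‖x - y‖ ^ 2 ≤ 2 * (‖a + x‖ ^ 2 + ‖a + y‖ ^ 2) := by
  have h : ‖x - y‖ ≤ ‖a + x‖ + ‖a + y‖ := by
    simpa only [add_sub_add_left_eq_sub] using norm_sub_le (a + x) (a + y)
  nlinarith [norm_nonneg (x - y), sq_nonneg (‖a + x‖ - ‖a + y‖)]

lemma norm_exp_I_mul_add_sub_exp_I_mul_neg_add (a b : ℝ) :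
    ‖exp (I * (a + b)) - exp (I * (-a + b))‖ = 2 * |Real.sin a| := by
  have h : exp (I * (a + b)) - exp (I * (-a + b)) =
      exp (I * ↑(-a + b)) * (exp (I * ↑(2 * a)) - 1) := by
    rw [mul_sub, mul_one, ← Complex.exp_add]
    push_cast
    ring_nf
  rw [h, norm_mul, norm_exp_I_mul_ofReal, norm_exp_I_mul_ofReal_sub_one, one_mul,
    mul_div_cancel_left₀ a two_ne_zero, norm_mul, Real.norm_two, Real.norm_eq_abs]

lemma two_mul_norm_sq_mul_sin_sq_le (d₁ d₂ : ℂ) (a b : ℝ) :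
    2 * ‖d₂‖ ^ 2 * Real.sin a ^ 2 ≤
      ‖d₁ + d₂ * exp (I * (a + b))‖ ^ 2 + ‖d₁ + d₂ * exp (I * (-a + b))‖ ^ 2 := by
  have h := norm_sub_sq_le_two_mul_norm_add_sq d₁ (d₂ * exp (I * (a + b)))
    (d₂ * exp (I * (-a + b)))
  rw [← mul_sub, norm_mul, norm_exp_I_mul_add_sub_exp_I_mul_neg_add, mul_pow, mul_pow,
    sq_abs] at h
  linarith

lemma norm_add_mul_exp_I_mul_le (d₁ d₂ z : ℂ) (hz : z.im = 0) :
    ‖d₁ + d₂ * exp (I * z)‖ ≤ ‖d₁‖ + ‖d₂‖ := by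
  calc ‖d₁ + d₂ * exp (I * z)‖ ≤ ‖d₁‖ + ‖d₂ * exp (I * z)‖ := norm_add_le _ _
    _ = ‖d₁‖ + ‖d₂‖ := by simp [norm_exp, hz]

lemma sin_sq_le_norm_sq_add_norm_sq_of_reflect (d₁ d₂ : ℂ) (hd₂ : 1 / 2 ≤ ‖d₂‖ ^ 2)
    (α₁ α₂ : ℝ) (m n : ℤ) :
    Real.sin (m * α₁) ^ 2 ≤ ‖d₁ + d₂ * exp (I * ((m : ℝ) * α₁ + (n : ℝ) * α₂))‖ ^ 2 +
      ‖d₁ + d₂ * exp (I * (((-m : ℤ) : ℝ) * α₁ + (n : ℝ) * α₂))‖ ^ 2 := by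
  have h := two_mul_norm_sq_mul_sin_sq_le d₁ d₂ (m * α₁) (n * α₂)
  push_cast at h ⊢
  rw [neg_mul]
  nlinarith [sq_nonneg (Real.sin (m * α₁))]

lemma summable_div_sq_intNormSq_sub {g : ℤ × ℤ → ℝ} {C : ℝ} (hg0 : ∀ η, 0 ≤ g η)
    (hgC : ∀ η, g η ≤ C) (lam : ℝ) :
    Summable fun η : ℤ × ℤ => g η / (((η.1 ^ 2 + η.2 ^ 2 : ℤ) : ℝ) - lam) ^ 2 :=
  ((summable_inv_sq_intNormSq_sub lam).mul_left C).of_nonneg_of_le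
    (fun η => div_nonneg (hg0 η) (sq_nonneg _))
    (fun η => mul_le_mul_of_nonneg_right (hgC η) (inv_nonneg.mpr (sq_nonneg _)))

theorem greens_lower_bound_general (lam α₁ α₂ B s : ℝ) (d₁ d₂ : ℂ)
    (hlam : ∀ ξ : ℤ × ℤ, ((ξ.1 ^ 2 + ξ.2 ^ 2 : ℤ) : ℝ) ≠ lam)
    (hd₂ : (1 : ℝ) / 2 ≤ ‖d₂‖ ^ 2)
    (hs : 0 < s) (ξ : ℤ × ℤ) (hξ₁ : ξ.1 ≠ 0)
    (hnear : |((ξ.1 ^ 2 + ξ.2 ^ 2 : ℤ) : ℝ) - lam| ≤ B)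
    (hsin : s ≤ |Real.sin ((ξ.1 : ℝ) * α₁)|) :
    s ^ 2 / (2 * B ^ 2) ≤
      ∑' η : ℤ × ℤ,
        ‖d₁ + d₂ * Complex.exp (Complex.I * ((η.1 : ℝ) * α₁ + (η.2 : ℝ) * α₂))‖ ^ 2 /
          (((η.1 ^ 2 + η.2 ^ 2 : ℤ) : ℝ) - lam) ^ 2 := by
  set F : ℤ × ℤ → ℝ := fun η =>
    ‖d₁ + d₂ * Complex.exp (Complex.I * ((η.1 : ℝ) * α₁ + (η.2 : ℝ) * α₂))‖ ^ 2 /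
      (((η.1 ^ 2 + η.2 ^ 2 : ℤ) : ℝ) - lam) ^ 2 with hF
  have hsum : Summable F := summable_div_sq_intNormSq_sub (fun _ => sq_nonneg _)
    (fun η => pow_le_pow_left₀ (norm_nonneg _) (norm_add_mul_exp_I_mul_le _ _ _ (by simp)) 2) lam
  have hne : ξ ≠ (-ξ.1, ξ.2) := by
    simp only [ne_eq, Prod.ext_iff, and_true]
    omega
  have hpair : F ξ + F (-ξ.1, ξ.2) ≤ ∑' η, F η := by
    simpa only [Finset.sum_pair hne] using
      hsum.sum_le_tsum {ξ, (-ξ.1, ξ.2)} (fun η _ => by positivity)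
  set D := ((ξ.1 ^ 2 + ξ.2 ^ 2 : ℤ) : ℝ) - lam
  have hD : 0 < D ^ 2 := sq_pos_of_ne_zero (sub_ne_zero.mpr (hlam ξ))
  have hDB : D ^ 2 ≤ B ^ 2 := sq_le_sq' (abs_le.mp hnear).1 (abs_le.mp hnear).2
  have hs2 : s ^ 2 ≤ Real.sin (ξ.1 * α₁) ^ 2 := by
    simpa only [sq_abs] using pow_le_pow_left₀ hs.le hsin 2
  calc s ^ 2 / (2 * B ^ 2) ≤ s ^ 2 / D ^ 2 := by gcongr; linarith [sq_nonneg B]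
    _ ≤ F ξ + F (-ξ.1, ξ.2) := by
      simp only [hF, neg_sq, ← add_div]
      gcongr
      exact hs2.trans (sin_sq_le_norm_sq_add_norm_sq_of_reflect d₁ d₂ hd₂ α₁ α₂ ξ.1 ξ.2)
    _ ≤ ∑' η, F η := hpair

/-- Lower bound for the L² mass of a combination of Green's functions: if some
lattice point ξ with ξ₁ ≠ 0 has |ξ|² within B of λ and |sin(ξ₁α₁)| ≥ s, then
Σ_η |d₁ + d₂ e^{i⟨η,x₀⟩}|²/(|η|²−λ)² ≥ s²/(2B²). -/
theorem greens_lower_bound (lam α₁ α₂ B s : ℝ) (d₁ d₂ : ℂ)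
    (hlam : ∀ ξ : ℤ × ℤ, ((ξ.1 ^ 2 + ξ.2 ^ 2 : ℤ) : ℝ) ≠ lam)
    (hnorm : ‖d₁‖ ^ 2 + ‖d₂‖ ^ 2 = 1)
    (hd₂ : (1 : ℝ) / 2 ≤ ‖d₂‖ ^ 2)
    (hB : 0 < B) (hs : 0 < s) (ξ : ℤ × ℤ) (hξ₁ : ξ.1 ≠ 0)
    (hnear : |((ξ.1 ^ 2 + ξ.2 ^ 2 : ℤ) : ℝ) - lam| ≤ B)
    (hsin : s ≤ |Real.sin ((ξ.1 : ℝ) * α₁)|) :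
    s ^ 2 / (2 * B ^ 2) ≤
      ∑' η : ℤ × ℤ,
        ‖d₁ + d₂ * Complex.exp (Complex.I * ((η.1 : ℝ) * α₁ + (η.2 : ℝ) * α₂))‖ ^ 2 /
          (((η.1 ^ 2 + η.2 ^ 2 : ℤ) : ℝ) - lam) ^ 2 :=
  greens_lower_bound_general lam α₁ α₂ B s d₁ d₂ hlam hd₂ hs ξ hξ₁ hnear hsin
end

section
/- Let x₁, x₂ ∈ 𝕋² with x₀ = x₂ − x₁ = (α₁, α₂) and α₁/π irrational. Let λ > 0 be an eigenvalue of the Laplacian on 𝕋² = ℝ²/2πℤ², with eigenspace E_λ = span{ e^{i⟨ξ, x⟩} : ξ ∈ ℤ², |ξ|² = λ } of dimension d = r₂(λ). Then the subspace { f ∈ E_λ : f(x₁) = f(x₂) = 0 } has dimension exactly d − 2. -/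
/-!
The plane waves `e^{i⟨ξ, x⟩}`, `ξ ∈ ℤ²`, are distinct characters of `ℝ²`, hence linearly
independent, so `dim E_λ` is the number of lattice points on the circle `|ξ|² = λ`. Each
vanishing condition is a linear functional on `E_λ`, so it suffices that neither point forces
the other: for a lattice point `ξ` with `ξ₁ ≠ 0` and its reflection `ξ' = (-ξ₁, ξ₂)`, the
combination of `e_ξ'` and `e_ξ` vanishing at `x₁` takes at `x₂` a value that is nonzero
because `e^{2iξ₁α₁} ≠ 1` when `α₁/π` is irrational, and symmetrically with `x₁`, `x₂` swapped.
-/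

open Real Complex

/-- The Laplace eigenspace on 𝕋² with eigenvalue λ, realized as the space of
2πℤ²-periodic trigonometric polynomials spanned by e^{i⟨ξ,x⟩}, |ξ|² = λ. -/
noncomputable def laplaceEigenspace (lam : ℝ) : Submodule ℂ (ℝ × ℝ → ℂ) :=
  Submodule.span ℂ {f | ∃ ξ : ℤ × ℤ, ((ξ.1 ^ 2 + ξ.2 ^ 2 : ℤ) : ℝ) = lam ∧
    f = fun x : ℝ × ℝ => Complex.exp (Complex.I * ((ξ.1 : ℝ) * x.1 + (ξ.2 : ℝ) * x.2))}

open Module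

noncomputable def planeWave (ξ : ℤ × ℤ) : AddChar (ℝ × ℝ) ℂ where
  toFun x := exp (I * ((ξ.1 : ℝ) * x.1 + (ξ.2 : ℝ) * x.2))
  map_zero_eq_one' := by simp
  map_add_eq_mul' x y := by
    rw [← Complex.exp_add, Prod.fst_add, Prod.snd_add]
    push_cast
    ring_nf

lemma planeWave_apply (ξ : ℤ × ℤ) (x : ℝ × ℝ) :
    planeWave ξ x = exp (I * ((ξ.1 : ℝ) * x.1 + (ξ.2 : ℝ) * x.2)) :=
  rfl

lemma planeWave_ne_zero (ξ : ℤ × ℤ) (x : ℝ × ℝ) : planeWave ξ x ≠ 0 :=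
  Complex.exp_ne_zero _

lemma exp_I_mul_ne_of_irrational {x y : ℝ} (h : Irrational ((x - y) / π)) :
    exp (I * x) ≠ exp (I * y) := by
  rw [Ne, Complex.exp_eq_exp_iff_exists_int]
  rintro ⟨n, hn⟩
  have hxy : x = y + n * (2 * π) := by simpa using congrArg Complex.im hn
  exact h ⟨2 * n, by rw [hxy]; push_cast; field_simp; ring⟩

lemma planeWave_injective : Function.Injective planeWave := by
  intro ξ η h
  have key (a b : ℤ) (hab : exp (I * a) = exp (I * b)) : a = b := by
    by_contra hne
    refine exp_I_mul_ne_of_irrational ?_ hab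
    rw [div_eq_mul_inv, ← Int.cast_sub]
    exact irrational_pi.inv.intCast_mul (sub_ne_zero.mpr hne)
  ext
  · exact key ξ.1 η.1 (by simpa [planeWave_apply] using congr(($h) (1, 0)))
  · exact key ξ.2 η.2 (by simpa [planeWave_apply] using congr(($h) (0, 1)))

lemma linearIndependent_planeWave : LinearIndependent ℂ fun ξ ↦ ⇑(planeWave ξ) :=
  (linearIndependent_monoidHom (Multiplicative (ℝ × ℝ)) ℂ).comp
    (AddChar.toMonoidHomEquiv ∘ planeWave)
    (AddChar.toMonoidHomEquiv.injective.comp planeWave_injective)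

def latticePointsOnCircle (lam : ℝ) : Set (ℤ × ℤ) :=
  {ξ | ((ξ.1 ^ 2 + ξ.2 ^ 2 : ℤ) : ℝ) = lam}

lemma latticePointsOnCircle_finite (lam : ℝ) : (latticePointsOnCircle lam).Finite := by
  refine (Set.finite_Icc (-⌈lam⌉, -⌈lam⌉) (⌈lam⌉, ⌈lam⌉)).subset fun ξ hξ ↦ ?_
  have h : ξ.1 ^ 2 + ξ.2 ^ 2 = ⌈lam⌉ := by rw [← hξ, Int.ceil_intCast]
  have h₁ := Int.le_self_sq ξ.1
  have h₁' := Int.le_self_sq (-ξ.1)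
  have h₂ := Int.le_self_sq ξ.2
  have h₂' := Int.le_self_sq (-ξ.2)
  rw [neg_sq] at h₁' h₂'
  simp only [Set.mem_Icc]
  constructor <;> constructor <;> nlinarith

lemma exists_mem_latticePointsOnCircle_fst_ne_zero {lam : ℝ} (hlam : 0 < lam)
    (hne : (latticePointsOnCircle lam).Nonempty) :
    ∃ ξ ∈ latticePointsOnCircle lam, ξ.1 ≠ 0 := by
  obtain ⟨ξ, hξ⟩ := hne
  by_cases h₁ : ξ.1 = 0
  · refine ⟨ξ.swap, by simpa [latticePointsOnCircle, add_comm] using hξ, fun h₂ ↦ hlam.ne' ?_⟩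
    simpa [latticePointsOnCircle, h₁, show ξ.2 = 0 from h₂] using hξ.symm
  · exact ⟨ξ, hξ, h₁⟩

lemma laplaceEigenspace_eq_span_image (lam : ℝ) :
    laplaceEigenspace lam =
      Submodule.span ℂ ((fun ξ ↦ ⇑(planeWave ξ)) '' latticePointsOnCircle lam) := by
  rw [laplaceEigenspace]
  congr 1
  ext f
  exact exists_congr fun ξ ↦ and_congr_right' eq_comm

instance (lam : ℝ) : FiniteDimensional ℂ (laplaceEigenspace lam) := by
  rw [laplaceEigenspace_eq_span_image]
  exact FiniteDimensional.span_of_finite ℂ ((latticePointsOnCircle_finite lam).image _)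

lemma finrank_laplaceEigenspace (lam : ℝ) :
    finrank ℂ (laplaceEigenspace lam) = (latticePointsOnCircle lam).ncard := by
  have := (latticePointsOnCircle_finite lam).fintype
  rw [laplaceEigenspace_eq_span_image, Set.image_eq_range, ← Nat.card_coe_set_eq,
    Nat.card_eq_fintype_card]
  exact finrank_span_eq_card (linearIndependent_planeWave.comp _ Subtype.val_injective)

lemma finrank_inf_ker_add_one {K V : Type*} [Field K] [AddCommGroup V] [Module K V]
    {E : Submodule K V} [FiniteDimensional K E] {φ : V →ₗ[K] K} (h : ∃ v ∈ E, φ v ≠ 0) :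
    finrank K ↥(E ⊓ LinearMap.ker φ) + 1 = finrank K E := by
  obtain ⟨v, hvE, hv⟩ := h
  have hne : φ.domRestrict E ≠ 0 := fun h0 ↦ hv (LinearMap.congr_fun h0 ⟨v, hvE⟩)
  rw [← Module.Dual.finrank_ker_add_one_of_ne_zero hne, LinearMap.ker_domRestrict,
    ← (Submodule.comapSubtypeEquivOfLe inf_le_left).finrank_eq, Submodule.comap_inf,
    Submodule.comap_subtype_self, top_inf_eq]

lemma exists_mem_laplaceEigenspace_apply_eq_zero_apply_ne_zero {lam : ℝ} {ξ : ℤ × ℤ}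
    (hξ : ξ ∈ latticePointsOnCircle lam) (hξ₁ : ξ.1 ≠ 0) {p q : ℝ × ℝ}
    (hpq : Irrational ((q.1 - p.1) / π)) :
    ∃ g ∈ laplaceEigenspace lam, g p = 0 ∧ g q ≠ 0 := by
  set ξ' : ℤ × ℤ := (-ξ.1, ξ.2)
  have hξ' : ξ' ∈ latticePointsOnCircle lam := by simpa [latticePointsOnCircle, ξ'] using hξ
  have mem {η} (hη : η ∈ latticePointsOnCircle lam) : ⇑(planeWave η) ∈ laplaceEigenspace lam := by
    rw [laplaceEigenspace_eq_span_image]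
    exact Submodule.subset_span ⟨η, hη, rfl⟩
  refine ⟨(planeWave ξ' p)⁻¹ • ⇑(planeWave ξ') - (planeWave ξ p)⁻¹ • ⇑(planeWave ξ),
    sub_mem (Submodule.smul_mem _ _ (mem hξ')) (Submodule.smul_mem _ _ (mem hξ)), ?_, ?_⟩
  · simp [planeWave_ne_zero]
  · simp only [Pi.sub_apply, Pi.smul_apply, smul_eq_mul, inv_mul_eq_div]
    rw [← AddChar.map_sub_eq_div, ← AddChar.map_sub_eq_div, sub_ne_zero, planeWave_apply,
      planeWave_apply]
    convert exp_I_mul_ne_of_irrational (x := -ξ.1 * (q.1 - p.1) + ξ.2 * (q.2 - p.2))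
      (y := ξ.1 * (q.1 - p.1) + ξ.2 * (q.2 - p.2)) ?_ using 3
    · simp [ξ']
    · simp
    · convert hpq.intCast_mul (m := -2 * ξ.1) (by omega) using 1
      push_cast
      ring

/-- If α₁/π is irrational, the subspace of the λ-eigenspace vanishing at the two
points x₁, x₂ (with x₂ − x₁ = (α₁, α₂)) has dimension d − 2 where d = r₂(λ). -/
theorem eigenspace_vanishing_dim (α₁ α₂ : ℝ) (x₁ x₂ : ℝ × ℝ)
    (hdiff : x₂ - x₁ = (α₁, α₂)) (hirr : Irrational (α₁ / π))
    (lam : ℝ) (hlam : 0 < lam)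
    (hex : ∃ ξ : ℤ × ℤ, ((ξ.1 ^ 2 + ξ.2 ^ 2 : ℤ) : ℝ) = lam) :
    Module.finrank ℂ
        ↥(laplaceEigenspace lam ⊓
          LinearMap.ker (LinearMap.proj (R := ℂ) (φ := fun _ : ℝ × ℝ => ℂ) x₁) ⊓
          LinearMap.ker (LinearMap.proj (R := ℂ) (φ := fun _ : ℝ × ℝ => ℂ) x₂))
      = ({ξ : ℤ × ℤ | ((ξ.1 ^ 2 + ξ.2 ^ 2 : ℤ) : ℝ) = lam}).ncard - 2 := by
  obtain ⟨ξ, hξ, hξ₁⟩ := exists_mem_latticePointsOnCircle_fst_ne_zero hlam hex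
  have h₁₂ : Irrational ((x₂.1 - x₁.1) / π) := by rwa [← Prod.fst_sub, hdiff]
  have h₂₁ : Irrational ((x₁.1 - x₂.1) / π) := by rw [← neg_sub, neg_div]; exact h₁₂.neg
  obtain ⟨g, hgE, hg₁, hg₂⟩ := exists_mem_laplaceEigenspace_apply_eq_zero_apply_ne_zero hξ hξ₁ h₁₂
  obtain ⟨h, hhE, -, hh₁⟩ := exists_mem_laplaceEigenspace_apply_eq_zero_apply_ne_zero hξ hξ₁ h₂₁
  have hdim₁ := finrank_inf_ker_add_one (φ := LinearMap.proj x₁) ⟨h, hhE, hh₁⟩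
  have hdim₂ := finrank_inf_ker_add_one
    (E := laplaceEigenspace lam ⊓ LinearMap.ker (LinearMap.proj x₁)) (φ := LinearMap.proj x₂)
    ⟨g, ⟨hgE, hg₁⟩, hg₂⟩
  rw [finrank_laplaceEigenspace] at hdim₁
  change _ = (latticePointsOnCircle lam).ncard - 2
  omega
end
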